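/- If a group G acts 3-discontinuously on a compactum T and A is a discrete G-finite set of entourages of T, then the induced action of G on the compactum T̃ = T ⊔ A is also 3-discontinuous. -/

import Mathlib

namespace RHG

/-- Triples with pairwise distinct components. -/
def distinct3 {X : Type*} : Set (X × X × X) :=
  {x | x.1 ≠ x.2.1 ∧ x.1 ≠ x.2.2 ∧ x.2.1 ≠ x.2.2}

/-- Pairs with distinct components. -/
def distinct2 {X : Type*} : Set (X × X) := {x | x.1 ≠ x.2}

/-- The action `act` of `G` on `X` is 3-discontinuous: the induced action on the space of
(ordered) triples of pairwise distinct points is properly discontinuous. -/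
def ThreeDisc {G X : Type*} [TopologicalSpace X] (act : G → X → X) : Prop :=
  ∀ K : Set (X × X × X), IsCompact K → K ⊆ distinct3 →
    Set.Finite {g : G |
      (((fun x : X × X × X => (act g x.1, act g x.2.1, act g x.2.2)) '' K) ∩ K).Nonempty}

/-- The action `act` of `G` on `X` is 2-cocompact: the action on the space of (ordered) pairs
of distinct points is cocompact. -/
def TwoCocompact {G X : Type*} [TopologicalSpace X] (act : G → X → X) : Prop :=
  ∃ K : Set (X × X), IsCompact K ∧ K ⊆ distinct2 ∧
    ∀ x : X × X, x ∈ (distinct2 : Set (X × X)) → ∃ g : G, (act g x.1, act g x.2) ∈ K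

/-- `ρ` is an action of the group `G` on `T` by homeomorphisms. -/
structure IsTopAction (G : Type*) [Group G] (T : Type*) [TopologicalSpace T]
    (ρ : G → T ≃ₜ T) : Prop where
  map_one : ρ 1 = Homeomorph.refl T
  map_mul : ∀ g h : G, ρ (g * h) = (ρ h).trans (ρ g)

/-- The stabilizer of a point for an action by homeomorphisms. -/
def actStab {G : Type*} [Group G] {T : Type*} [TopologicalSpace T]
    (ρ : G → T ≃ₜ T) (hρ : IsTopAction G T ρ) (p : T) : Subgroup G where
  carrier := {g : G | ρ g p = p}
  one_mem' := by
    simp only [Set.mem_setOf_eq, hρ.map_one, Homeomorph.refl_apply, id_eq]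
  mul_mem' := by
    intro a b ha hb
    simp only [Set.mem_setOf_eq] at *
    rw [hρ.map_mul, Homeomorph.trans_apply, hb, ha]
  inv_mem' := by
    intro a ha
    simp only [Set.mem_setOf_eq] at *
    have h1 : ρ (a⁻¹ * a) p = ρ a⁻¹ (ρ a p) := by
      rw [hρ.map_mul, Homeomorph.trans_apply]
    rw [inv_mul_cancel, hρ.map_one, ha] at h1
    simpa using h1.symm

/-- A parabolic point: its stabilizer is infinite and it is the unique fixed point
of its stabilizer. -/
def IsParabolicPt {G : Type*} [Group G] {T : Type*} [TopologicalSpace T]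
    (ρ : G → T ≃ₜ T) (hρ : IsTopAction G T ρ) (p : T) : Prop :=
  Set.Infinite ((actStab ρ hρ p : Set G)) ∧
    ∀ q : T, (∀ g ∈ actStab ρ hρ p, ρ g q = q) → q = p

/-- `T` contains at least three points. -/
def HasThreePts (T : Type*) : Prop := ∃ x y z : T, x ≠ y ∧ x ≠ z ∧ y ≠ z

end RHG

namespace RHG

/-- An entourage of a topological space `T`: a symmetric neighborhood of the diagonal
in `T × T` (identified with a neighborhood of the diagonal in the symmetric square). -/
structure Entourage (T : Type*) [TopologicalSpace T] where
  carrier : Set (T × T)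
  symm' : ∀ x y : T, (x, y) ∈ carrier → (y, x) ∈ carrier
  mem_nhds' : ∀ x : T, carrier ∈ nhds (x, x)

variable {T : Type*} [TopologicalSpace T]

/-- A set is `e`-small if its `Δ_e`-diameter is at most 1, i.e. any two of its points
form a pair belonging to `e`. -/
def eSmall (e : Entourage T) (s : Set T) : Prop :=
  ∀ x ∈ s, ∀ y ∈ s, (x, y) ∈ e.carrier

/-- `Δ_e (x, y) ≤ k` for the maximal metric `Δ_e` with `Δ_e ≤ 1` on pairs of `e`:
there is a chain of length `k` from `x` to `y` with consecutive pairs in `e`. -/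
def eDistLE (e : Entourage T) (k : ℕ) (x y : T) : Prop :=
  ∃ c : ℕ → T, c 0 = x ∧ c k = y ∧ ∀ i < k, (c i, c (i + 1)) ∈ e.carrier

/-- Two entourages are unlinked if `T` is the union of an `a`-small and a `b`-small set. -/
def EntUnlinked (a b : Entourage T) : Prop :=
  ∃ sa sb : Set T, eSmall a sa ∧ eSmall b sb ∧ sa ∪ sb = Set.univ

/-- Two entourages are linked if they are not unlinked. -/
def EntLinked (a b : Entourage T) : Prop := ¬ EntUnlinked a b

/-- Standing convention on entourages: self-linked, and `Δ_e`-diameter of `T` greater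
than `4`. -/
def GoodEnt (e : Entourage T) : Prop :=
  EntLinked e e ∧ ∃ x y : T, ¬ eDistLE e 4 x y

/-- The shadow `sh_a b`: the intersection of all `a`-small sets with `b`-small complement. -/
def shadow (a b : Entourage T) : Set T :=
  ⋂₀ {s : Set T | eSmall a s ∧ eSmall b sᶜ}

/-- The betweenness relation `a − b − c (k)`:
`a ⋈ b ⋈ c` and `Δ_b(sh_b a, sh_b c) > k`. -/
def Btw (a b c : Entourage T) (k : ℕ) : Prop :=
  EntUnlinked a b ∧ EntUnlinked b c ∧
    ∀ x ∈ shadow b a, ∀ y ∈ shadow b c, ¬ eDistLE b k x y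

/-- The betweenness relation `a − b − p (k)` for a point `p ∈ T`:
`a ⋈ b` and `Δ_b(sh_b a, b₀) > k` for every `b`-small neighborhood `b₀` of `p`. -/
def BtwP (a b : Entourage T) (p : T) (k : ℕ) : Prop :=
  EntUnlinked a b ∧
    ∀ s : Set T, eSmall b s → s ∈ nhds p → ∀ x ∈ shadow b a, ∀ y ∈ s, ¬ eDistLE b k x y

/-- The betweenness relation `p − b − q (k)` for points `p, q ∈ T`:
`Δ_b(b₁, b₂) > k` for all `b`-small neighborhoods `b₁` of `p` and `b₂` of `q`. -/
def BtwPP (p : T) (b : Entourage T) (q : T) (k : ℕ) : Prop :=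
  ∀ s₁ s₂ : Set T, eSmall b s₁ → s₁ ∈ nhds p → eSmall b s₂ → s₂ ∈ nhds q →
    ∀ x ∈ s₁, ∀ y ∈ s₂, ¬ eDistLE b k x y

/-- The image of an entourage under a homeomorphism of `T`. -/
def entMap (φ : T ≃ₜ T) (e : Entourage T) : Entourage T where
  carrier := (fun x : T × T => ((φ.symm x.1 : T), (φ.symm x.2 : T))) ⁻¹' e.carrier
  symm' := fun x y h => e.symm' _ _ h
  mem_nhds' := fun x => by
    have hcont : Continuous fun x : T × T => ((φ.symm x.1 : T), (φ.symm x.2 : T)) :=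
      (φ.symm.continuous.comp continuous_fst).prodMk (φ.symm.continuous.comp continuous_snd)
    exact hcont.continuousAt.preimage_mem_nhds (e.mem_nhds' (φ.symm x))

/-- The orbit of an entourage under an action of `G` on `T` by homeomorphisms. -/
def entOrbit {G : Type*} [Group G] (ρ : G → T ≃ₜ T) (a₀ : Entourage T) :
    Set (Entourage T) :=
  {e | ∃ g : G, e = entMap (ρ g) a₀}

/-- A set of entourages is discrete if every entourage is linked with only finitely many
of its elements. -/
def DiscreteEnts (A : Set (Entourage T)) : Prop :=
  ∀ w : Entourage T, Set.Finite {a ∈ A | EntLinked a w}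

/-- `d_A(a, b) ≤ n` in the graph of entourages: there is a walk of length `n` in `A`
from `a` to `b` with consecutive vertices linked. -/
def AdistLE (A : Set (Entourage T)) (n : ℕ) (a b : Entourage T) : Prop :=
  ∃ c : ℕ → Entourage T, c 0 = a ∧ c n = b ∧ (∀ i ≤ n, c i ∈ A) ∧
    ∀ i < n, EntLinked (c i) (c (i + 1))

/-- The `d`-neighborhood of a subset `S` inside the graph of entourages on `A`. -/
def Anbhd (A : Set (Entourage T)) (d : ℕ) (S : Set (Entourage T)) : Set (Entourage T) :=
  {a ∈ A | ∃ b ∈ S, AdistLE A d a b}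

/-- The horosphere `T_{A,k}(p)`: the entourages of `A` which are not separated
from `p` by any element of `A`. -/
def horosphere (A : Set (Entourage T)) (k : ℕ) (p : T) : Set (Entourage T) :=
  {e ∈ A | ¬ ∃ a ∈ A, BtwP e a p k}

/-- `Ψ_k(a,b) = {c ∈ A : a − c − b (k)}`. -/
def Psi (A : Set (Entourage T)) (k : ℕ) (a b : Entourage T) : Set (Entourage T) :=
  {c ∈ A | Btw a c b k}

/-- The topology on `T̃ = T ⊔ A`, generated by the singletons of elements of `A` and
the convex hulls `õ = o ∪ {e ∈ A : oᶜ is e-small}` of open sets `o ⊆ T`. -/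
def tildeTop (A : Set (Entourage T)) : TopologicalSpace (T ⊕ ↥A) :=
  TopologicalSpace.generateFrom
    ({s | ∃ e : ↥A, s = {Sum.inr e}} ∪
      {s | ∃ o : Set T, IsOpen o ∧
        s = Sum.inl '' o ∪ Sum.inr '' {e : ↥A | eSmall (↑e) oᶜ}})

/-- The set of accumulation points of a set `S` in a topological space. -/
def accPts {X : Type*} [TopologicalSpace X] (S : Set X) : Set X :=
  {x | x ∈ closure (S \ {x})}

/-- The extension of the action of `G` on `T` to `T̃ = T ⊔ A`. -/
def tildeAct {G : Type*} [Group G] (ρ : G → T ≃ₜ T) (A : Set (Entourage T))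
    (hinv : ∀ g : G, ∀ a ∈ A, entMap (ρ g) a ∈ A) (g : G) :
    T ⊕ ↥A → T ⊕ ↥A :=
  fun x => match x with
  | Sum.inl t => Sum.inl (ρ g t)
  | Sum.inr e => Sum.inr ⟨entMap (ρ g) ↑e, hinv g (↑e) e.2⟩

/-- The `m`-separation property for a set of entourages. -/
def Separates (A : Set (Entourage T)) (m : ℕ) : Prop :=
  ∀ p q : T, p ≠ q → ∃ a ∈ A, BtwPP p a q m

/-- `A` generates the filter of entourages. -/
def GeneratesFilter (A : Set (Entourage T)) : Prop :=
  ∀ u : Entourage T, ∃ (n : ℕ) (f : Fin n → Entourage T),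
    (∀ i, f i ∈ A) ∧ (⋂ i, (f i).carrier) ⊆ u.carrier

/-- `γ` restricted to the integer interval `[i, j]` is a `c`-quasigeodesic of the graph
of entourages on `A`. -/
def IsQGOn (A : Set (Entourage T)) (c : ℝ) (i j : ℕ) (γ : ℕ → Entourage T) : Prop :=
  ∀ s t : ℕ, i ≤ s → s ≤ j → i ≤ t → t ≤ j →
    (∀ m : ℕ, AdistLE A m (γ s) (γ t) → (1 / c) * |(s : ℝ) - (t : ℝ)| - c < (m : ℝ)) ∧
    ∃ m : ℕ, AdistLE A m (γ s) (γ t) ∧ (m : ℝ) ≤ c * |(s : ℝ) - (t : ℝ)| + c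

/-- `γ : [0, n] → A` is a `c`-quasigeodesic of the graph of entourages on `A`. -/
def IsQG (A : Set (Entourage T)) (c : ℝ) (n : ℕ) (γ : ℕ → Entourage T) : Prop :=
  (∀ i ≤ n, γ i ∈ A) ∧ IsQGOn A c 0 n γ

/-- `γ : [0, n] → A` is a curve (edge-path) in the graph of entourages on `A`. -/
def IsCurve (A : Set (Entourage T)) (n : ℕ) (γ : ℕ → Entourage T) : Prop :=
  (∀ i ≤ n, γ i ∈ A) ∧ ∀ i < n, EntLinked (γ i) (γ (i + 1))

/-- `γ : [0, n] → A` is an `(l, c)`-tight curve (with horosphere parameter `k` and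
neighborhood radius `r`): every subinterval of length at most `l` is a `c`-quasigeodesic,
and if more than `l` points of the image of a subinterval lie in the `r`-neighborhood of
a horosphere of a parabolic point, then the endpoints of the subinterval are at
`d_A`-distance greater than `l/c − c`. -/
def IsTight (A : Set (Entourage T)) (k l : ℕ) (c : ℝ) (r n : ℕ)
    (γ : ℕ → Entourage T) : Prop :=
  IsCurve A n γ ∧
  (∀ i j : ℕ, i ≤ j → j ≤ n → j - i ≤ l → IsQGOn A c i j γ) ∧
  (∀ i j : ℕ, i ≤ j → j ≤ n → ∀ p : T, (horosphere A k p).Infinite →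
    l < Set.ncard ((γ '' Set.Icc i j) ∩ Anbhd A r (horosphere A k p)) →
    ∀ m : ℕ, AdistLE A m (γ i) (γ j) → (l : ℝ) / c - c < (m : ℝ))

/-- The vertex `γ i` of the curve `γ` is `d`-horospherical (with constant `e`): `γ`
contains subsegments `[i₁, i]` and `[i, i₂]` of length greater than `e` lying in the
`d`-neighborhood of the horosphere of a parabolic point. -/
def IsHoroVertex (A : Set (Entourage T)) (k d e n : ℕ) (γ : ℕ → Entourage T)
    (i : ℕ) : Prop :=
  ∃ (p : T) (i₁ i₂ : ℕ), (horosphere A k p).Infinite ∧ i₁ ≤ i ∧ i ≤ i₂ ∧ i₂ ≤ n ∧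
    e < i - i₁ ∧ e < i₂ - i ∧
    ∀ m : ℕ, i₁ ≤ m → m ≤ i₂ → γ m ∈ Anbhd A d (horosphere A k p)

end RHG

namespace RHG

/-!
Along a nonprincipal ultrafilter `U` on `G`, say that `(p, q)` is a cluster pair if points near
`p` are eventually moved near `q`. Three cluster pairs with distinct sources and distinct targets
would produce a compact set of distinct triples meeting infinitely many of its translates, so by
König's theorem all cluster pairs `(p, q)` have `p = r` or `q = s` for fixed `r, s`.
In `T̃` the same dichotomy holds for limits: if an entourage `e ∈ A` were moved towards anything
but `s`, then `T ∖ {r}` would be `e`-small, and `e` would not be self-linked; if entourages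
converging to a point other than `r` were moved onto `e' ∈ A`, then `T ∖ {s}` would be
`e'`-small. For infinitely many `g` moving a compact set of distinct triples of `T̃` into itself,
each coordinate of the limit triples thus has source `r` or target `s`, and two coordinates
coincide.
-/

open Filter Topology Set

section Matchings

variable {X : Type*}

def NoThreeMatching (R : X → X → Prop) : Prop :=
  ∀ p ∈ (distinct3 : Set (X × X × X)), ∀ q ∈ (distinct3 : Set (X × X × X)),
    R p.1 q.1 → R p.2.1 q.2.1 → R p.2.2 q.2.2 → False

theorem HasThreePts.exists_ne_ne (h3 : HasThreePts X) (a b : X) : ∃ c, c ≠ a ∧ c ≠ b := by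
  obtain ⟨x, y, z, hxy, hxz, hyz⟩ := h3
  by_contra! h
  rcases eq_or_ne x a with rfl | hxa
  · exact hyz ((h y hxy.symm).trans (h z hxz.symm).symm)
  rcases eq_or_ne y a with rfl | hya
  · exact hxz ((h x hxy).trans (h z hyz.symm).symm)
  exact hxy ((h x hxa).trans (h y hya).symm)

theorem forall_eq_or_eq_of_fans {R : X → X → Prop} (hR : NoThreeMatching R)
    {r s v₁ v₂ u₁ u₂ : X} (hv₁ : R r v₁) (hv₂ : R r v₂) (hv : v₁ ≠ v₂) (hv₁s : v₁ ≠ s)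
    (hv₂s : v₂ ≠ s) (hu₁ : R u₁ s) (hu₂ : R u₂ s) (hu : u₁ ≠ u₂) (hu₁r : u₁ ≠ r)
    (hu₂r : u₂ ≠ r) :
    ∀ p q, R p q → p = r ∨ q = s := by
  intro p q hpq
  by_contra! h
  obtain ⟨v, hrv, hvs, hvq⟩ : ∃ v, R r v ∧ v ≠ s ∧ v ≠ q := by
    by_cases h₁ : v₁ = q
    · exact ⟨v₂, hv₂, hv₂s, h₁ ▸ hv.symm⟩
    · exact ⟨v₁, hv₁, hv₁s, h₁⟩
  obtain ⟨u, hus, hur, hup⟩ : ∃ u, R u s ∧ u ≠ r ∧ u ≠ p := by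
    by_cases h₁ : u₁ = p
    · exact ⟨u₂, hu₂, hu₂r, h₁ ▸ hu.symm⟩
    · exact ⟨u₁, hu₁, hu₁r, h₁⟩
  exact hR (p, r, u) ⟨h.1, hup.symm, hur.symm⟩ (q, v, s) ⟨hvq.symm, h.2, hvs⟩ hpq hrv hus

/-- König's theorem in the case of matching number two. -/
theorem exists_forall_eq_or_eq_of_noThreeMatching (h3 : HasThreePts X) {R : X → X → Prop}
    (hl : ∀ x, ∃ y, R x y) (hr : ∀ y, ∃ x, R x y) (hR : NoThreeMatching R) :
    ∃ r s, ∀ p q, R p q → p = r ∨ q = s := by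
  have ⟨p₁, _⟩ := h3
  obtain ⟨q₁, h₁⟩ := hl p₁
  by_cases hcover : ∀ p q, R p q → p = p₁ ∨ q = q₁
  · exact ⟨p₁, q₁, hcover⟩
  push Not at hcover
  obtain ⟨p₂, q₂, h₂, hp, hq⟩ := hcover
  obtain ⟨c, hc₁, hc₂⟩ := h3.exists_ne_ne p₁ p₂
  obtain ⟨d, hd₁, hd₂⟩ := h3.exists_ne_ne q₁ q₂
  obtain ⟨c', hc⟩ := hl c
  obtain ⟨d', hd⟩ := hr d
  have hc' : q₁ = c' ∨ q₂ = c' := by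
    by_contra! h
    exact hR (p₁, p₂, c) ⟨hp.symm, hc₁.symm, hc₂.symm⟩ (q₁, q₂, c') ⟨hq.symm, h.1, h.2⟩ h₁ h₂ hc
  have hd' : p₁ = d' ∨ p₂ = d' := by
    by_contra! h
    exact hR (p₁, p₂, d') ⟨hp.symm, h.1, h.2⟩ (q₁, q₂, d) ⟨hq.symm, hd₁.symm, hd₂.symm⟩ h₁ h₂ hd
  -- two cases give a third matching pair, the other two give fans at `(p₂, q₁)` or `(p₁, q₂)`
  rcases hc' with rfl | rfl <;> rcases hd' with rfl | rfl
  · exact (hR (c, p₁, p₂) ⟨hc₁, hc₂, hp.symm⟩ (q₁, d, q₂) ⟨hd₁.symm, hq.symm, hd₂⟩ hc hd h₂).elim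
  · exact ⟨p₂, q₁, forall_eq_or_eq_of_fans hR h₂ hd hd₂.symm hq hd₁ h₁ hc hc₁.symm hp.symm hc₂⟩
  · exact ⟨p₁, q₂, forall_eq_or_eq_of_fans hR h₁ hd hd₁.symm hq.symm hd₂ h₂ hc hc₂.symm hp hc₁⟩
  · exact (hR (c, p₂, p₁) ⟨hc₂, hc₁, hp⟩ (q₂, d, q₁) ⟨hd₂.symm, hq, hd₁⟩ hc hd h₁).elim

theorem false_of_mem_distinct3 {ξ η : X × X × X} (hξ : ξ ∈ distinct3) (hη : η ∈ distinct3)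
    {a b : X} (h₁ : ξ.1 = a ∨ η.1 = b) (h₂ : ξ.2.1 = a ∨ η.2.1 = b)
    (h₃ : ξ.2.2 = a ∨ η.2.2 = b) : False := by
  obtain ⟨hξ₁₂, hξ₁₃, hξ₂₃⟩ := hξ
  obtain ⟨hη₁₂, hη₁₃, hη₂₃⟩ := hη
  grind

end Matchings

section ClusterPairs

variable {G X : Type*} [TopologicalSpace X]

def ClusterPair (act : G → X → X) (l : Filter G) (p q : X) : Prop :=
  ∀ o ∈ 𝓝 p, ∀ o' ∈ 𝓝 q, ∀ᶠ g in l, ∃ x ∈ o, act g x ∈ o'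

theorem clusterPair_of_tendsto {act : G → X → X} {l : Filter G} {x : G → X} {p q : X}
    (hx : Tendsto x l (𝓝 p)) (hgx : Tendsto (fun g => act g (x g)) l (𝓝 q)) :
    ClusterPair act l p q := fun _ ho _ ho' =>
  (hx.eventually_mem ho).and (hgx.eventually_mem ho') |>.mono fun g hg => ⟨x g, hg⟩

theorem isOpen_distinct3 [T2Space X] : IsOpen (distinct3 : Set (X × X × X)) :=
  (isOpen_ne_fun continuous_fst (continuous_fst.comp continuous_snd)).inter
    ((isOpen_ne_fun continuous_fst (continuous_snd.comp continuous_snd)).inter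
      (isOpen_ne_fun (continuous_fst.comp continuous_snd) (continuous_snd.comp continuous_snd)))

theorem noThreeMatching_clusterPair [T2Space X] [LocallyCompactSpace X] {act : G → X → X}
    (h3d : ThreeDisc act) {l : Filter G} [l.NeBot] (hl : l ≤ cofinite) :
    NoThreeMatching (ClusterPair act l) := by
  intro p hp q hq h₁ h₂ h₃
  obtain ⟨K, hKp, hKd, hK⟩ := local_compact_nhds (isOpen_distinct3.mem_nhds hp)
  obtain ⟨L, hLq, hLd, hL⟩ := local_compact_nhds (isOpen_distinct3.mem_nhds hq)
  obtain ⟨o₁, ho₁, o₂₃, ho₂₃, hoK⟩ := mem_nhds_prod_iff.mp hKp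
  obtain ⟨o₂, ho₂, o₃, ho₃, ho⟩ := mem_nhds_prod_iff.mp ho₂₃
  obtain ⟨o₁', ho₁', o₂₃', ho₂₃', hoL⟩ := mem_nhds_prod_iff.mp hLq
  obtain ⟨o₂', ho₂', o₃', ho₃', ho'⟩ := mem_nhds_prod_iff.mp ho₂₃'
  have hfin := h3d (K ∪ L) (hK.union hL) (union_subset hKd hLd)
  obtain ⟨g, ⟨⟨x₁, hx₁, hy₁⟩, ⟨x₂, hx₂, hy₂⟩, ⟨x₃, hx₃, hy₃⟩⟩, hg⟩ :=
    (((h₁ o₁ ho₁ o₁' ho₁').and ((h₂ o₂ ho₂ o₂' ho₂').and (h₃ o₃ ho₃ o₃' ho₃'))).and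
      (hl hfin.compl_mem_cofinite)).exists
  exact hg ⟨_, ⟨(x₁, x₂, x₃), Or.inl (hoK ⟨hx₁, ho ⟨hx₂, hx₃⟩⟩), rfl⟩,
    Or.inr (hoL ⟨hy₁, ho' ⟨hy₂, hy₃⟩⟩)⟩

end ClusterPairs

section Convergence

variable {G X : Type*} [TopologicalSpace X] [CompactSpace X]

theorem exists_tendsto_of_compactSpace {α : Type*} (U : Ultrafilter α) (f : α → X) :
    ∃ p, Tendsto f (U : Filter α) (𝓝 p) :=
  ⟨_, (U.map f).le_nhds_lim⟩

/-- A 3-discontinuous action is a convergence action, `r` being the repelling and `s` the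
attracting point. -/
theorem exists_clusterPair_cover [T2Space X] (h3 : HasThreePts X) {ρ : G → X ≃ₜ X}
    (h3d : ThreeDisc fun g x => ρ g x) {U : Ultrafilter G} (hU : (U : Filter G) ≤ cofinite) :
    ∃ r s, ∀ p q, ClusterPair (fun g x => ρ g x) (U : Filter G) p q → p = r ∨ q = s := by
  refine exists_forall_eq_or_eq_of_noThreeMatching h3 (fun x => ?_) (fun y => ?_)
    (noThreeMatching_clusterPair h3d hU)
  · obtain ⟨q, hq⟩ := exists_tendsto_of_compactSpace U fun g => ρ g x
    exact ⟨q, clusterPair_of_tendsto tendsto_const_nhds hq⟩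
  · obtain ⟨p, hp⟩ := exists_tendsto_of_compactSpace U fun g => (ρ g).symm y
    exact ⟨p, clusterPair_of_tendsto hp (by simp)⟩

variable {U : Ultrafilter G} {r s : X}

theorem tendsto_apply_of_ne {act : G → X → X}
    (hcover : ∀ p q, ClusterPair act (U : Filter G) p q → p = r ∨ q = s) {x : X} (hx : x ≠ r) :
    Tendsto (fun g => act g x) (U : Filter G) (𝓝 s) := by
  obtain ⟨q, hq⟩ := exists_tendsto_of_compactSpace U fun g => act g x
  obtain rfl := (hcover x q (clusterPair_of_tendsto tendsto_const_nhds hq)).resolve_left hx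
  exact hq

theorem tendsto_symm_apply_of_ne {ρ : G → X ≃ₜ X}
    (hcover : ∀ p q, ClusterPair (fun g x => ρ g x) (U : Filter G) p q → p = r ∨ q = s) {y : X}
    (hy : y ≠ s) : Tendsto (fun g => (ρ g).symm y) (U : Filter G) (𝓝 r) := by
  obtain ⟨p, hp⟩ := exists_tendsto_of_compactSpace U fun g => (ρ g).symm y
  have hpy : ClusterPair (fun g x => ρ g x) U p y :=
    clusterPair_of_tendsto hp (by simpa using tendsto_const_nhds)
  obtain rfl := (hcover p y hpy).resolve_right hy
  exact hp

end Convergence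

theorem threeDisc_of_forall_ultrafilter {G X : Type*} [TopologicalSpace X] {act : G → X → X}
    (h : ∀ U : Ultrafilter G, (U : Filter G) ≤ cofinite → ∀ (x : G → X × X × X)
      (ξ η : X × X × X), ξ ∈ distinct3 → η ∈ distinct3 → Tendsto x (U : Filter G) (𝓝 ξ) →
      Tendsto (fun g => (act g (x g).1, act g (x g).2.1, act g (x g).2.2)) (U : Filter G) (𝓝 η) →
      False) :
    ThreeDisc act := by
  intro K hK hKd
  by_contra hS
  obtain ⟨U, hU⟩ := @Ultrafilter.exists_le _ _ (Set.Infinite.cofinite_inf_principal_neBot hS)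
  have hwit : ∀ᶠ g in (U : Filter G), ∃ x ∈ K, (act g x.1, act g x.2.1, act g x.2.2) ∈ K :=
    mem_of_superset (le_principal_iff.mp (hU.trans inf_le_right))
      fun _ ⟨_, ⟨x, hx, rfl⟩, hy⟩ => ⟨x, hx, hy⟩
  obtain ⟨_, x₀, -⟩ := hwit.exists
  have : Nonempty (X × X × X) := ⟨x₀⟩
  obtain ⟨x, hx⟩ := Filter.skolem.mp hwit
  obtain ⟨ξ, hξ, hxξ⟩ := hK.ultrafilter_le_nhds' (U.map x) (hx.mono fun _ => And.left)
  obtain ⟨η, hη, hxη⟩ := hK.ultrafilter_le_nhds' (U.map _) (hx.mono fun _ => And.right)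
  exact h U (hU.trans inf_le_left) x ξ η (hKd hξ) (hKd hη) hxξ hxη

section Entourages

variable {T : Type*} [TopologicalSpace T]

theorem mem_entMap {φ : T ≃ₜ T} {e : Entourage T} {x y : T} :
    (x, y) ∈ (entMap φ e).carrier ↔ (φ.symm x, φ.symm y) ∈ e.carrier := Iff.rfl

theorem eSmall_singleton (e : Entourage T) (x : T) : eSmall e {x} := by
  intro y hy z hz
  rw [mem_singleton_iff.mp hy, mem_singleton_iff.mp hz]
  exact mem_of_mem_nhds (e.mem_nhds' x)

theorem not_eSmall_compl_singleton {e : Entourage T} (he : EntLinked e e) (x : T) :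
    ¬ eSmall e {x}ᶜ :=
  fun h => he ⟨{x}ᶜ, {x}, h, eSmall_singleton e x, compl_union_self _⟩

theorem exists_mem_apply_mem_of_eSmall_compl {e : Entourage T} (he : EntLinked e e)
    {φ : T ≃ₜ T} {o o' : Set T} (ho : eSmall e oᶜ) (ho' : eSmall (entMap φ e) o'ᶜ) :
    ∃ x ∈ o, φ x ∈ o' := by
  by_contra! h
  refine he ⟨oᶜ, φ ⁻¹' o'ᶜ, ho, fun x hx y hy => by simpa [mem_entMap] using ho' _ hx _ hy, ?_⟩
  exact eq_univ_of_forall fun x => (em (x ∈ o)).symm.imp id (h x)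

end Entourages

section Tilde

variable {T : Type*} [TopologicalSpace T] {A : Set (Entourage T)}

/-- The basic open set `õ` of `T̃`. -/
def tildeHull (A : Set (Entourage T)) (o : Set T) : Set (T ⊕ ↥A) :=
  Sum.inl '' o ∪ Sum.inr '' {e : ↥A | eSmall (↑e) oᶜ}

@[simp]
theorem inl_mem_tildeHull {o : Set T} {t : T} : Sum.inl t ∈ tildeHull A o ↔ t ∈ o := by
  simp [tildeHull]

@[simp]
theorem inr_mem_tildeHull {o : Set T} {e : ↥A} :
    Sum.inr e ∈ tildeHull A o ↔ eSmall (↑e) oᶜ := by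
  simp [tildeHull]

variable {ι : Type*} {l : Filter ι} {c : ι → T ⊕ ↥A}

theorem eventually_eq_inr_of_tendsto {e : ↥A}
    (hc : Tendsto c l (@nhds _ (tildeTop A) (.inr e))) : ∀ᶠ i in l, c i = .inr e :=
  hc (@IsOpen.mem_nhds _ (tildeTop A) _ _
    (TopologicalSpace.isOpen_generateFrom_of_mem (Or.inl ⟨e, rfl⟩)) rfl)

theorem eventually_mem_tildeHull_of_tendsto {p : T}
    (hc : Tendsto c l (@nhds _ (tildeTop A) (.inl p))) {o : Set T} (ho : IsOpen o) (hp : p ∈ o) :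
    ∀ᶠ i in l, c i ∈ tildeHull A o :=
  hc (@IsOpen.mem_nhds _ (tildeTop A) _ _
    (TopologicalSpace.isOpen_generateFrom_of_mem (Or.inr ⟨o, ho, rfl⟩)) (inl_mem_tildeHull.mpr hp))

theorem eventually_mem_carrier_of_tendsto [T2Space T] {η : T ⊕ ↥A} {s : T} {t t' : ι → T}
    (hc : Tendsto c l (@nhds _ (tildeTop A) η)) (hη : η ≠ .inl s) (ht : Tendsto t l (𝓝 s))
    (ht' : Tendsto t' l (𝓝 s)) :
    ∀ᶠ i in l, ∀ e : ↥A, c i = .inr e → (t i, t' i) ∈ (e : Entourage T).carrier := by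
  rcases η with q | e₀
  · obtain ⟨V, O, hV, hO, hqV, hsO, hVO⟩ := t2_separation fun h : q = s => hη (h ▸ rfl)
    filter_upwards [eventually_mem_tildeHull_of_tendsto hc hV hqV, ht (hO.mem_nhds hsO),
      ht' (hO.mem_nhds hsO)] with i hi hti hti' e he
    rw [he, inr_mem_tildeHull] at hi
    exact hi _ (hVO.subset_compl_left hti) _ (hVO.subset_compl_left hti')
  · filter_upwards [eventually_eq_inr_of_tendsto hc,
      (ht.prodMk_nhds ht') (e₀.1.mem_nhds' s)] with i hi hmem e he
    rw [hi, Sum.inr_injective.eq_iff] at he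
    exact he ▸ hmem

end Tilde

section TildeAction

variable {G : Type*} [Group G] {T : Type*} [TopologicalSpace T] {ρ : G → T ≃ₜ T}
  {A : Set (Entourage T)} (hinv : ∀ g : G, ∀ a ∈ A, entMap (ρ g) a ∈ A)

@[simp]
theorem tildeAct_inl (g : G) (t : T) : tildeAct ρ A hinv g (.inl t) = .inl (ρ g t) := rfl

@[simp]
theorem tildeAct_inr (g : G) (e : ↥A) :
    tildeAct ρ A hinv g (.inr e) = .inr ⟨entMap (ρ g) e, hinv g e e.2⟩ := rfl

variable {l : Filter G} {c : G → T ⊕ ↥A}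

theorem clusterPair_of_tendsto_tilde (hlinked : ∀ a ∈ A, EntLinked a a) {p q : T}
    (hc : Tendsto c l (@nhds _ (tildeTop A) (.inl p)))
    (hgc : Tendsto (fun g => tildeAct ρ A hinv g (c g)) l (@nhds _ (tildeTop A) (.inl q))) :
    ClusterPair (fun g x => ρ g x) l p q := by
  intro o ho o' ho'
  obtain ⟨u, huo, hu, hpu⟩ := mem_nhds_iff.mp ho
  obtain ⟨u', huo', hu', hqu'⟩ := mem_nhds_iff.mp ho'
  filter_upwards [eventually_mem_tildeHull_of_tendsto hc hu hpu,
    eventually_mem_tildeHull_of_tendsto hgc hu' hqu'] with g h h'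
  rcases hcg : c g with t | e
  · rw [hcg, inl_mem_tildeHull] at h
    rw [hcg, tildeAct_inl, inl_mem_tildeHull] at h'
    exact ⟨t, huo h, huo' h'⟩
  · rw [hcg, inr_mem_tildeHull] at h
    rw [hcg, tildeAct_inr, inr_mem_tildeHull] at h'
    obtain ⟨x, hx, hx'⟩ := exists_mem_apply_mem_of_eSmall_compl (hlinked e e.2) h h'
    exact ⟨x, huo hx, huo' hx'⟩

theorem eq_inl_or_eq_inl_of_tendsto [CompactSpace T] [T2Space T]
    (hlinked : ∀ a ∈ A, EntLinked a a) {U : Ultrafilter G} {r s : T}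
    (hcover : ∀ p q, ClusterPair (fun g x => ρ g x) (U : Filter G) p q → p = r ∨ q = s)
    {ξ η : T ⊕ ↥A} (hc : Tendsto c U (@nhds _ (tildeTop A) ξ))
    (hgc : Tendsto (fun g => tildeAct ρ A hinv g (c g)) U (@nhds _ (tildeTop A) η)) :
    ξ = .inl r ∨ η = .inl s := by
  rcases ξ with p | e
  · rcases η with q | e'
    · exact (hcover p q (clusterPair_of_tendsto_tilde hinv hlinked hc hgc)).imp
        (congrArg _) (congrArg _)
    · left
      by_contra hpr
      refine not_eSmall_compl_singleton (hlinked e' e'.2) s fun x hx y hy => ?_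
      obtain ⟨g, hg, hge⟩ := ((eventually_mem_carrier_of_tendsto hc hpr
        (tendsto_symm_apply_of_ne hcover hx) (tendsto_symm_apply_of_ne hcover hy)).and
        (eventually_eq_inr_of_tendsto hgc)).exists
      rcases hcg : c g with t | e
      · simp [hcg] at hge
      · rw [hcg, tildeAct_inr, Sum.inr_injective.eq_iff] at hge
        simpa [← hge, mem_entMap] using hg e hcg
  · right
    by_contra hη
    refine not_eSmall_compl_singleton (hlinked e e.2) r fun x hx y hy => ?_
    obtain ⟨g, hg, hcg⟩ := ((eventually_mem_carrier_of_tendsto hgc hη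
      (tendsto_apply_of_ne hcover hx) (tendsto_apply_of_ne hcover hy)).and
      (eventually_eq_inr_of_tendsto hc)).exists
    have hxy := mem_entMap.mp (hg _ (by rw [hcg, tildeAct_inr]))
    simpa using hxy

end TildeAction

theorem tilde_action_three_discontinuous_general {G : Type*} [Group G]
    {T : Type*} [TopologicalSpace T] [CompactSpace T] [T2Space T] (h3 : HasThreePts T)
    (ρ : G → T ≃ₜ T)
    (h3d : ThreeDisc fun (g : G) (x : T) => ρ g x)
    (A : Set (Entourage T))
    (hgood : ∀ a ∈ A, GoodEnt a)
    (hinv : ∀ g : G, ∀ a ∈ A, entMap (ρ g) a ∈ A) :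
    @ThreeDisc G (T ⊕ ↥A) (tildeTop A) (tildeAct ρ A hinv) := by
  let _ := tildeTop A
  have hlinked : ∀ a ∈ A, EntLinked a a := fun a ha => (hgood a ha).1
  refine threeDisc_of_forall_ultrafilter fun U hU x ξ η hξ hη hx hgx => ?_
  obtain ⟨r, s, hcover⟩ := exists_clusterPair_cover h3 h3d hU
  exact false_of_mem_distinct3 hξ hη
    (eq_inl_or_eq_inl_of_tendsto hinv hlinked hcover hx.fst_nhds hgx.fst_nhds)
    (eq_inl_or_eq_inl_of_tendsto hinv hlinked hcover hx.snd_nhds.fst_nhds hgx.snd_nhds.fst_nhds)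
    (eq_inl_or_eq_inl_of_tendsto hinv hlinked hcover hx.snd_nhds.snd_nhds hgx.snd_nhds.snd_nhds)

/-- If a group `G` acts 3-discontinuously on a compactum `T` and `A` is a discrete
`G`-finite (`G`-invariant) set of entourages of `T`, then the induced action of `G` on
`T̃ = T ⊔ A` is also 3-discontinuous. -/
theorem tilde_action_three_discontinuous {G : Type*} [Group G]
    {T : Type*} [TopologicalSpace T] [CompactSpace T] [T2Space T] (h3 : HasThreePts T)
    (ρ : G → T ≃ₜ T) (hρ : IsTopAction G T ρ)
    (h3d : ThreeDisc fun (g : G) (x : T) => ρ g x)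
    (A : Set (Entourage T))
    (hgood : ∀ a ∈ A, GoodEnt a)
    (hdisc : DiscreteEnts A)
    (hinv : ∀ g : G, ∀ a ∈ A, entMap (ρ g) a ∈ A)
    (hGfin : ∃ F : Set (Entourage T), F.Finite ∧ F ⊆ A ∧
      ∀ a ∈ A, ∃ g : G, ∃ b ∈ F, a = entMap (ρ g) b) :
    @ThreeDisc G (T ⊕ ↥A) (tildeTop A) (tildeAct ρ A hinv) :=
  tilde_action_three_discontinuous_general h3 ρ h3d A hgood hinv

end RHG
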